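/- Let X be a subshift over a finite alphabet Λ, let ε > 0, and let B₁, …, B_m ∈ B*(X) be blocks such that for every j = 1, …, m there exists a measure μ_j ∈ M(X) with d*(B_j, μ_j) < ε. Then d*(B, μ) < 2ε, where B = B₁B₂⋯B_m is the concatenation of the blocks B₁, …, B_m and μ = Σ_{j=1}^m (|B_j|/|B|) μ_j. -/

import Mathlib

open MeasureTheory
open scoped ENNReal

/-- The left shift on `ℤ → Λ`: `(shiftZ x) i = x (i+1)`. -/
def shiftZ {Λ : Type*} (x : ℤ → Λ) : ℤ → Λ := fun i => x (i + 1)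

/-- The block `x|_{[i, i+k)}` of length `k`. -/
def blockAt {Λ : Type*} (x : ℤ → Λ) (i : ℤ) (k : ℕ) : List Λ :=
  List.ofFn fun j : Fin k => x (i + j.val)

/-- The frequency of occurrences of the block `C` in the block `B`. -/
noncomputable def Freq {Λ : Type*} (B C : List Λ) : ℝ :=
  (({i : ℕ | i + C.length ≤ B.length ∧
      ∀ j : Fin C.length, B[i + (j : ℕ)]? = C[(j : ℕ)]?}).ncard : ℝ) / (B.length : ℝ)

/-- The set `B*(X)` of (nonempty) finite blocks occurring in elements of `X`. -/
def BlocksOf {Λ : Type*} (X : Set (ℤ → Λ)) : Set (List Λ) :=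
  {B | B ≠ [] ∧ ∃ x ∈ X, ∃ i : ℤ, blockAt x i B.length = B}

/-- A subshift: a nonempty, closed, shift-invariant subset of `Λ^ℤ`. -/
def IsSubshift {Λ : Type*} [TopologicalSpace Λ] (X : Set (ℤ → Λ)) : Prop :=
  X.Nonempty ∧ IsClosed X ∧ shiftZ '' X = X

/-- The cylinder set associated with a block `C`. -/
def cyl {Λ : Type*} (C : List Λ) : Set (ℤ → Λ) :=
  {x | ∀ j : Fin C.length, x ((j : ℕ) : ℤ) = C.get j}

/-- `M(X)`: Borel probability measures carried by `X`. -/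
def MeasOf {Λ : Type*} [MeasurableSpace Λ] (X : Set (ℤ → Λ)) :
    Set (Measure (ℤ → Λ)) :=
  {μ | IsProbabilityMeasure μ ∧ μ X = 1}

/-- `M_σ(X)`: shift-invariant measures in `M(X)`. -/
def InvMeasOf {Λ : Type*} [MeasurableSpace Λ] (X : Set (ℤ → Λ)) :
    Set (Measure (ℤ → Λ)) :=
  {μ | μ ∈ MeasOf X ∧ Measure.map shiftZ μ = μ}

/-- `M_σ^erg(X)`: ergodic measures in `M_σ(X)`. -/
def ErgMeasOf {Λ : Type*} [MeasurableSpace Λ] (X : Set (ℤ → Λ)) :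
    Set (Measure (ℤ → Λ)) :=
  {μ | μ ∈ InvMeasOf X ∧ Ergodic shiftZ μ}

/-- An element of the combined space of blocks and measures. -/
abbrev Obj (Λ : Type*) [MeasurableSpace Λ] := List Λ ⊕ Measure (ℤ → Λ)

/-- The valuation of an object (block or measure) on a block `C`:
frequency for blocks, measure of the cylinder for measures. -/
noncomputable def objVal {Λ : Type*} [MeasurableSpace Λ] : Obj Λ → List Λ → ℝ
  | Sum.inl B => fun C => Freq B C
  | Sum.inr μ => fun C => (μ (cyl C)).toReal

/-- The metric `d*` on the combined space of blocks and measures. -/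
noncomputable def dStar {Λ : Type*} [Fintype Λ] [MeasurableSpace Λ]
    (ω₁ ω₂ : Obj Λ) : ℝ :=
  ∑' l : ℕ, (2 : ℝ) ^ (-(l : ℤ) - 1) *
    ∑ C : Fin (l + 1) → Λ, |objVal ω₁ (List.ofFn C) - objVal ω₂ (List.ofFn C)|

/-!
Occurrences of a word `C` in the blocks `B_j` sit at disjoint positions of the concatenation
`B`, so `Fr_B(C) ≥ ∑ⱼ wⱼ Fr_{B_j}(C)` with `wⱼ = |B_j| / |B|`. Summed over the words of a fixed
length, the defect `Fr_B(C) - ∑ⱼ wⱼ Fr_{B_j}(C)` is at most `∑ⱼ wⱼ (1 - ∑_C Fr_{B_j}(C))`, and since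
each `μ_j` gives total mass `1` to these words, this is at most the weighted level-`l` distance
between `B_j` and `μ_j`. With the triangle inequality, every level of `d*(B, μ)` is at most twice
the weighted average of the levels of `d*(B_j, μ_j)`.
-/

open Finset

section Occurrences

variable {Λ : Type*}

open scoped Classical in
/-- The range bound only matters for `C = []`, which is a prefix of every `B.drop i`. -/
noncomputable def occurrences (B C : List Λ) : Finset ℕ :=
  {i ∈ range (B.length + 1 - C.length) | C <+: B.drop i}

theorem mem_occurrences {B C : List Λ} {i : ℕ} :
    i ∈ occurrences B C ↔ i + C.length ≤ B.length ∧ C <+: B.drop i := by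
  simp only [occurrences, mem_filter, mem_range]
  exact and_congr_left fun _ => by omega

theorem freq_eq_card_occurrences_div (B C : List Λ) :
    Freq B C = #(occurrences B C) / B.length := by
  rw [Freq, ← Set.ncard_coe_finset]
  congr 3
  ext i
  simp only [Set.mem_ofPred_eq, mem_coe, mem_occurrences, List.prefix_iff_getElem?,
    List.getElem?_drop]
  exact and_congr_right fun _ =>
    ⟨fun h j hj => by simpa [hj] using h ⟨j, hj⟩, fun h j => by simpa using h j j.2⟩

theorem card_occurrences_add_le_append {C : List Λ} (hC : C ≠ []) (B D : List Λ) :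
    #(occurrences B C) + #(occurrences D C) ≤ #(occurrences (B ++ D) C) := by
  classical
  have hlen : 0 < C.length := List.length_pos_iff.2 hC
  have hdisj :
      Disjoint (occurrences B C) ((occurrences D C).map (addLeftEmbedding B.length)) := by
    simp only [disjoint_left, mem_map, mem_occurrences, addLeftEmbedding_apply, not_exists,
      not_and]
    intro i hi k _ hk
    omega
  calc #(occurrences B C) + #(occurrences D C)
      = #(occurrences B C ∪ (occurrences D C).map (addLeftEmbedding B.length)) := by
        rw [card_union_of_disjoint hdisj, card_map]
    _ ≤ #(occurrences (B ++ D) C) := card_le_card fun i hi => ?_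
  simp only [mem_union, mem_map, addLeftEmbedding_apply] at hi
  rcases hi with hi | ⟨k, hk, rfl⟩
  · rw [mem_occurrences] at hi ⊢
    refine ⟨by simp; omega, ?_⟩
    rw [List.drop_append_of_le_length (by omega)]
    exact hi.2.trans (List.prefix_append _ _)
  · rw [mem_occurrences] at hk ⊢
    refine ⟨by simp; omega, ?_⟩
    rw [List.drop_append, List.drop_of_length_le (by omega), List.nil_append,
      Nat.add_sub_cancel_left]
    exact hk.2

theorem sum_card_occurrences_le_flatten {C : List Λ} (hC : C ≠ []) (L : List (List Λ)) :
    (L.map fun B => #(occurrences B C)).sum ≤ #(occurrences L.flatten C) := by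
  induction L with
  | nil => simp
  | cons B L ih =>
    rw [List.map_cons, List.sum_cons, List.flatten_cons]
    exact (Nat.add_le_add_left ih _).trans (card_occurrences_add_le_append hC B L.flatten)

theorem List.ofFn_prefix_iff {n : ℕ} {D : List Λ} (hD : n ≤ D.length) (C : Fin n → Λ) :
    List.ofFn C <+: D ↔ C = fun j : Fin n => D[(j : ℕ)]'(j.2.trans_le hD) := by
  simp only [List.prefix_iff_getElem?, List.length_ofFn, List.getElem_ofFn, funext_iff]
  refine ⟨fun h j => ?_, fun h j hj => ?_⟩
  · simpa [List.getElem?_eq_getElem (show (j : ℕ) < D.length by omega), eq_comm] using h j j.2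
  · simpa [List.getElem?_eq_getElem (show j < D.length by omega)] using (h ⟨j, hj⟩).symm

theorem sum_card_occurrences_ofFn [Fintype Λ] (B : List Λ) (n : ℕ) :
    ∑ C : Fin n → Λ, #(occurrences B (List.ofFn C)) = B.length + 1 - n := by
  classical
  have hunique : ∀ i ∈ range (B.length + 1 - n),
      (∑ C : Fin n → Λ, if List.ofFn C <+: B.drop i then 1 else 0) = 1 := fun i hi => by
    have hi : n ≤ (B.drop i).length := by simp at hi ⊢; omega
    simp_rw [List.ofFn_prefix_iff hi, sum_ite_eq', mem_univ, if_true]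
  simp only [occurrences, List.length_ofFn, card_filter]
  rw [sum_comm, sum_congr rfl hunique, sum_const, card_range, smul_eq_mul, mul_one]

end Occurrences

section Frequencies

variable {Λ : Type*}

theorem freq_nonneg (B C : List Λ) : 0 ≤ Freq B C := by
  unfold Freq; positivity

theorem sum_freq_ofFn [Fintype Λ] (B : List Λ) (n : ℕ) :
    ∑ C : Fin n → Λ, Freq B (List.ofFn C) = ((B.length + 1 - n : ℕ) : ℝ) / B.length := by
  simp_rw [freq_eq_card_occurrences_div, ← sum_div]
  rw [← Nat.cast_sum, sum_card_occurrences_ofFn]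

/-- `|B| / |B|` is `1`, or `0` for the empty block. -/
theorem sum_freq_ofFn_succ_le [Fintype Λ] (B : List Λ) (l : ℕ) :
    ∑ C : Fin (l + 1) → Λ, Freq B (List.ofFn C) ≤ B.length / B.length := by
  rw [sum_freq_ofFn]
  gcongr
  omega

theorem length_flatten_ofFn {m : ℕ} (Bs : Fin m → List Λ) :
    (List.ofFn Bs).flatten.length = ∑ j, (Bs j).length := by
  rw [List.length_flatten, List.map_ofFn, List.sum_ofFn]
  rfl

theorem length_le_length_flatten_ofFn {m : ℕ} (Bs : Fin m → List Λ) (j : Fin m) :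
    (Bs j).length ≤ (List.ofFn Bs).flatten.length := by
  rw [length_flatten_ofFn]
  exact single_le_sum (f := fun j => (Bs j).length) (fun _ _ => Nat.zero_le _) (mem_univ j)

theorem length_flatten_ofFn_pos {m : ℕ} {Bs : Fin m → List Λ} (hBs : ∀ j, Bs j ≠ [])
    (j : Fin m) :
    0 < (List.ofFn Bs).flatten.length :=
  (List.length_pos_iff.2 (hBs j)).trans_le (length_le_length_flatten_ofFn Bs j)

theorem sum_mul_freq_le_freq_flatten {m : ℕ} (Bs : Fin m → List Λ) (hBs : ∀ j, Bs j ≠ [])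
    {C : List Λ} (hC : C ≠ []) :
    ∑ j, ((Bs j).length / (List.ofFn Bs).flatten.length : ℝ) * Freq (Bs j) C
      ≤ Freq (List.ofFn Bs).flatten C := by
  have hterm : ∀ j, ((Bs j).length / (List.ofFn Bs).flatten.length : ℝ) * Freq (Bs j) C
      = #(occurrences (Bs j) C) / (List.ofFn Bs).flatten.length := by
    intro j
    have : ((Bs j).length : ℝ) ≠ 0 := by simpa using hBs j
    rw [freq_eq_card_occurrences_div]
    field_simp
  simp_rw [hterm, ← sum_div, freq_eq_card_occurrences_div]
  gcongr
  have := sum_card_occurrences_le_flatten hC (List.ofFn Bs)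
  rw [List.map_ofFn, List.sum_ofFn] at this
  exact_mod_cast this

end Frequencies

section Cylinders

variable {Λ : Type*}

theorem cyl_ofFn {n : ℕ} (C : Fin n → Λ) :
    cyl (List.ofFn C) = (fun (x : ℤ → Λ) (j : Fin n) => x j) ⁻¹' {C} := by
  ext x
  simp only [cyl, Set.mem_ofPred_eq, Set.mem_preimage, Set.mem_singleton_iff, funext_iff,
    List.get_eq_getElem, List.getElem_ofFn]
  exact ⟨fun h j => by simpa using h (Fin.cast List.length_ofFn.symm j),
    fun h j => h (Fin.cast List.length_ofFn j)⟩

theorem sum_measure_cyl_ofFn [Fintype Λ] [MeasurableSpace Λ] [MeasurableSingletonClass Λ]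
    (μ : Measure (ℤ → Λ)) (n : ℕ) : ∑ C : Fin n → Λ, μ (cyl (List.ofFn C)) = μ Set.univ := by
  have hmeas : Measurable fun (x : ℤ → Λ) (j : Fin n) => x j :=
    measurable_pi_lambda _ fun j => measurable_pi_apply _
  simp_rw [cyl_ofFn]
  rw [sum_measure_preimage_singleton _ fun C _ => hmeas (measurableSet_singleton C)]
  simp

theorem sum_toReal_measure_cyl_ofFn [Fintype Λ] [MeasurableSpace Λ]
    [MeasurableSingletonClass Λ] (μ : Measure (ℤ → Λ)) [IsProbabilityMeasure μ] (n : ℕ) :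
    ∑ C : Fin n → Λ, (μ (cyl (List.ofFn C))).toReal = 1 := by
  rw [← ENNReal.toReal_sum fun C _ => measure_ne_top μ _, sum_measure_cyl_ofFn, measure_univ,
    ENNReal.toReal_one]

end Cylinders

theorem MeasureTheory.Measure.toReal_sum_smul_apply {α ι : Type*} [MeasurableSpace α] [Fintype ι]
    (c : ι → ℝ≥0∞) (hc : ∀ j, c j ≠ ∞) (μ : ι → Measure α) [∀ j, IsFiniteMeasure (μ j)]
    (s : Set α) : ((∑ j, c j • μ j) s).toReal = ∑ j, (c j).toReal * (μ j s).toReal := by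
  simp_rw [Measure.coe_finsetSum, Finset.sum_apply, Measure.smul_apply, smul_eq_mul]
  rw [ENNReal.toReal_sum fun j _ => ENNReal.mul_ne_top (hc j) (measure_ne_top _ _)]
  simp_rw [ENNReal.toReal_mul]

theorem sum_abs_sub_mixture_le {ι κ : Type*} [Fintype ι] [Fintype κ] {w : ι → ℝ}
    {a : κ → ℝ} {b p : ι → κ → ℝ} (hw : ∀ j, 0 ≤ w j) (hba : ∀ C, ∑ j, w j * b j C ≤ a C)
    (ha : ∑ C, a C ≤ ∑ j, w j) (hp : ∀ j, ∑ C, p j C = 1) :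
    ∑ C, |a C - ∑ j, w j * p j C| ≤ 2 * ∑ j, w j * ∑ C, |b j C - p j C| := by
  have hpoint : ∀ C, |a C - ∑ j, w j * p j C|
      ≤ (a C - ∑ j, w j * b j C) + ∑ j, w j * |b j C - p j C| := by
    intro C
    calc |a C - ∑ j, w j * p j C|
        ≤ |a C - ∑ j, w j * b j C| + |∑ j, w j * (b j C - p j C)| := by
          simp_rw [mul_sub, sum_sub_distrib]; exact abs_sub_le _ _ _
      _ ≤ (a C - ∑ j, w j * b j C) + ∑ j, w j * |b j C - p j C| := by
          rw [abs_of_nonneg (sub_nonneg.2 (hba C))]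
          gcongr
          refine (abs_sum_le_sum_abs _ _).trans_eq (sum_congr rfl fun j _ => ?_)
          rw [abs_mul, abs_of_nonneg (hw j)]
  have hdefect : ∑ C, (a C - ∑ j, w j * b j C) ≤ ∑ j, w j * ∑ C, |b j C - p j C| := by
    calc ∑ C, (a C - ∑ j, w j * b j C)
        = ∑ C, a C - ∑ j, w j * ∑ C, b j C := by
          rw [sum_sub_distrib, sum_comm]; simp_rw [mul_sum]
      _ ≤ ∑ j, w j * ∑ C, (p j C - b j C) := by
          simp_rw [sum_sub_distrib, hp, mul_sub, mul_one, sum_sub_distrib]; linarith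
      _ ≤ ∑ j, w j * ∑ C, |b j C - p j C| := by
          gcongr with j _ C _
          · exact hw j
          · rw [abs_sub_comm]
            exact le_abs_self _
  calc ∑ C, |a C - ∑ j, w j * p j C|
      ≤ ∑ C, ((a C - ∑ j, w j * b j C) + ∑ j, w j * |b j C - p j C|) :=
        sum_le_sum fun C _ => hpoint C
    _ = ∑ C, (a C - ∑ j, w j * b j C) + ∑ j, w j * ∑ C, |b j C - p j C| := by
        rw [sum_add_distrib, sum_comm]; simp_rw [mul_sum]
    _ ≤ 2 * ∑ j, w j * ∑ C, |b j C - p j C| := by linarith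

theorem summable_two_zpow_mul_of_bounded {f : ℕ → ℝ} {c : ℝ} (h0 : ∀ l, 0 ≤ f l)
    (hc : ∀ l, f l ≤ c) : Summable fun l : ℕ => (2 : ℝ) ^ (-(l : ℤ) - 1) * f l := by
  have hgeom : ∀ l : ℕ, (2 : ℝ) ^ (-(l : ℤ) - 1) = (1 / 2) ^ l / 2 := fun l => by
    rw [zpow_sub_one₀ two_ne_zero, zpow_neg, zpow_natCast, one_div, inv_pow, div_eq_mul_inv]
  refine Summable.of_nonneg_of_le (fun l => mul_nonneg (by positivity) (h0 l)) (fun l => ?_)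
    ((summable_geometric_two.div_const 2).mul_right c)
  rw [hgeom]
  exact mul_le_mul_of_nonneg_left (hc l) (by positivity)

theorem tsum_mul_le_sum_mul_tsum {ι : Type*} [Fintype ι] {g T : ℕ → ℝ} {A : ι → ℕ → ℝ}
    {c : ι → ℝ} (hg : ∀ l, 0 ≤ g l) (hT : ∀ l, 0 ≤ T l)
    (hA : ∀ j, Summable fun l => g l * A j l) (hle : ∀ l, T l ≤ ∑ j, c j * A j l) :
    ∑' l, g l * T l ≤ ∑ j, c j * ∑' l, g l * A j l := by
  have hsum : Summable fun l => ∑ j, c j * (g l * A j l) :=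
    summable_sum fun j _ => (hA j).mul_left (c j)
  have hpoint : ∀ l, g l * T l ≤ ∑ j, c j * (g l * A j l) := fun l => by
    calc g l * T l ≤ g l * ∑ j, c j * A j l := mul_le_mul_of_nonneg_left (hle l) (hg l)
      _ = ∑ j, c j * (g l * A j l) := by rw [mul_sum]; simp_rw [mul_left_comm]
  calc ∑' l, g l * T l ≤ ∑' l, ∑ j, c j * (g l * A j l) :=
        (Summable.of_nonneg_of_le (fun l => mul_nonneg (hg l) (hT l)) hpoint hsum).tsum_le_tsum
          hpoint hsum
    _ = ∑ j, c j * ∑' l, g l * A j l := by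
        rw [Summable.tsum_finsetSum fun j _ => (hA j).mul_left (c j)]
        simp_rw [tsum_mul_left]

section DStar

variable {Λ : Type*} [Fintype Λ] [MeasurableSpace Λ]

noncomputable def dStarLevel (ω₁ ω₂ : Obj Λ) (l : ℕ) : ℝ :=
  ∑ C : Fin (l + 1) → Λ, |objVal ω₁ (List.ofFn C) - objVal ω₂ (List.ofFn C)|

theorem dStar_eq_tsum_dStarLevel (ω₁ ω₂ : Obj Λ) :
    dStar ω₁ ω₂ = ∑' l : ℕ, (2 : ℝ) ^ (-(l : ℤ) - 1) * dStarLevel ω₁ ω₂ l :=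
  rfl

theorem dStarLevel_nonneg (ω₁ ω₂ : Obj Λ) (l : ℕ) : 0 ≤ dStarLevel ω₁ ω₂ l :=
  sum_nonneg fun _ _ => abs_nonneg _

variable [MeasurableSingletonClass Λ]

theorem dStarLevel_le_two (B : List Λ) (μ : Measure (ℤ → Λ)) [IsProbabilityMeasure μ] (l : ℕ) :
    dStarLevel (.inl B) (.inr μ) l ≤ 2 := by
  calc dStarLevel (.inl B) (.inr μ) l
      ≤ ∑ C : Fin (l + 1) → Λ, (Freq B (List.ofFn C) + (μ (cyl (List.ofFn C))).toReal) :=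
        sum_le_sum fun C _ => (abs_sub _ _).trans_eq <| by
          rw [objVal, objVal, abs_of_nonneg (freq_nonneg _ _),
            abs_of_nonneg ENNReal.toReal_nonneg]
    _ ≤ 1 + 1 := by
        rw [sum_add_distrib, sum_toReal_measure_cyl_ofFn]
        gcongr
        exact (sum_freq_ofFn_succ_le B l).trans (div_self_le_one _)
    _ = 2 := one_add_one_eq_two

theorem dStarLevel_flatten_le {m : ℕ} (Bs : Fin m → List Λ) (hBs : ∀ j, Bs j ≠ [])
    (μs : Fin m → Measure (ℤ → Λ)) [∀ j, IsProbabilityMeasure (μs j)] (l : ℕ) :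
    dStarLevel (.inl (List.ofFn Bs).flatten)
        (.inr (∑ j, ((Bs j).length / (List.ofFn Bs).flatten.length : ℝ≥0∞) • μs j)) l
      ≤ 2 * ∑ j, ((Bs j).length / (List.ofFn Bs).flatten.length : ℝ) *
          dStarLevel (.inl (Bs j)) (.inr (μs j)) l := by
  have hK : ∀ j, ((List.ofFn Bs).flatten.length : ℝ≥0∞) ≠ 0 := fun j => by
    exact_mod_cast (length_flatten_ofFn_pos hBs j).ne'
  have hw : ∀ j, ((Bs j).length / (List.ofFn Bs).flatten.length : ℝ≥0∞).toReal
      = (Bs j).length / (List.ofFn Bs).flatten.length := fun j => by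
    rw [ENNReal.toReal_div, ENNReal.toReal_natCast, ENNReal.toReal_natCast]
  simp only [dStarLevel, objVal, Measure.toReal_sum_smul_apply _
    (fun j => ENNReal.div_ne_top (ENNReal.natCast_ne_top _) (hK j)), hw]
  refine sum_abs_sub_mixture_le (fun j => by positivity)
    (fun C => sum_mul_freq_le_freq_flatten Bs hBs (List.ne_nil_of_length_pos (by simp)))
    ((sum_freq_ofFn_succ_le _ l).trans_eq ?_) (fun j => sum_toReal_measure_cyl_ofFn (μs j) _)
  rw [← sum_div, ← Nat.cast_sum, length_flatten_ofFn]

theorem dStar_flatten_le {m : ℕ} (Bs : Fin m → List Λ) (hBs : ∀ j, Bs j ≠ [])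
    (μs : Fin m → Measure (ℤ → Λ)) [∀ j, IsProbabilityMeasure (μs j)] :
    dStar (.inl (List.ofFn Bs).flatten)
        (.inr (∑ j, ((Bs j).length / (List.ofFn Bs).flatten.length : ℝ≥0∞) • μs j))
      ≤ 2 * ∑ j, ((Bs j).length / (List.ofFn Bs).flatten.length : ℝ) *
          dStar (.inl (Bs j)) (.inr (μs j)) := by
  simp only [dStar_eq_tsum_dStarLevel, mul_sum, ← mul_assoc]
  refine tsum_mul_le_sum_mul_tsum (fun l => by positivity) (dStarLevel_nonneg _ _)
    (fun j => summable_two_zpow_mul_of_bounded (dStarLevel_nonneg _ _) (dStarLevel_le_two _ _))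
    fun l => (dStarLevel_flatten_le Bs hBs μs l).trans_eq ?_
  rw [mul_sum]
  simp_rw [mul_assoc]

end DStar

theorem dStar_concatenation_general
    {Λ : Type*} [Fintype Λ] [TopologicalSpace Λ] [DiscreteTopology Λ]
    [MeasurableSpace Λ] [BorelSpace Λ]
    (X : Set (ℤ → Λ)) (ε : ℝ) (hε : 0 < ε)
    (m : ℕ) (Bs : Fin m → List Λ) (μs : Fin m → Measure (ℤ → Λ))
    (hBs : ∀ j, Bs j ∈ BlocksOf X) (hμs : ∀ j, μs j ∈ MeasOf X)
    (hclose : ∀ j, dStar (Sum.inl (Bs j)) (Sum.inr (μs j)) < ε) :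
    dStar (Sum.inl (List.ofFn Bs).flatten)
      (Sum.inr (∑ j : Fin m,
        (((Bs j).length : ℝ≥0∞) / ((List.ofFn Bs).flatten.length : ℝ≥0∞)) • μs j)) < 2 * ε := by
  have hne : ∀ j, Bs j ≠ [] := fun j => (hBs j).1
  have : ∀ j, IsProbabilityMeasure (μs j) := fun j => (hμs j).1
  refine (dStar_flatten_le Bs hne μs).trans_lt (mul_lt_mul_of_pos_left ?_ two_pos)
  rcases isEmpty_or_nonempty (Fin m) with _ | _
  · simpa using hε
  have hK : (0 : ℝ) < (List.ofFn Bs).flatten.length :=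
    Nat.cast_pos.2 (length_flatten_ofFn_pos hne (Classical.arbitrary _))
  calc ∑ j, ((Bs j).length / (List.ofFn Bs).flatten.length : ℝ) *
        dStar (.inl (Bs j)) (.inr (μs j))
      < ∑ j, ((Bs j).length / (List.ofFn Bs).flatten.length : ℝ) * ε :=
        sum_lt_sum_of_nonempty univ_nonempty fun j _ => mul_lt_mul_of_pos_left (hclose j)
          (div_pos (Nat.cast_pos.2 (List.length_pos_iff.2 (hne j))) hK)
    _ = ε := by
        rw [← sum_mul, ← sum_div, ← Nat.cast_sum, ← length_flatten_ofFn, div_self hK.ne',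
          one_mul]

theorem dStar_concatenation
    {Λ : Type*} [Fintype Λ] [TopologicalSpace Λ] [DiscreteTopology Λ]
    [MeasurableSpace Λ] [BorelSpace Λ]
    (X : Set (ℤ → Λ)) (hX : IsSubshift X) (ε : ℝ) (hε : 0 < ε)
    (m : ℕ) (Bs : Fin m → List Λ) (μs : Fin m → Measure (ℤ → Λ))
    (hBs : ∀ j, Bs j ∈ BlocksOf X) (hμs : ∀ j, μs j ∈ MeasOf X)
    (hclose : ∀ j, dStar (Sum.inl (Bs j)) (Sum.inr (μs j)) < ε) :
    dStar (Sum.inl (List.ofFn Bs).flatten)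
      (Sum.inr (∑ j : Fin m,
        (((Bs j).length : ℝ≥0∞) / ((List.ofFn Bs).flatten.length : ℝ≥0∞)) • μs j)) < 2 * ε :=
  dStar_concatenation_general X ε hε m Bs μs hBs hμs hclose
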